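/- arXiv:2412.11737 — 3 statements merged into one kernel-verified Lean document; each statement's English description precedes it below -/
import Mathlib

section
/- Let Z be a real random variable with the normal distribution N(0, σ²) for σ > 0. Then the characteristic function of ln|Z|, i.e., f(t) = E[exp(i t ln|Z|)], equals (√2 σ)^{it} · Γ((1+it)/2) / Γ(1/2). -/
open MeasureTheory ProbabilityTheory Real Filter
open scoped ENNReal NNReal Topology

open Set in
/-- Generalization of `integral_comp_abs` to vector-valued functions. -/
lemma integral_comp_abs' {E : Type*} [NormedAddCommGroup E] [NormedSpace ℝ E] (f : ℝ → E) :
    ∫ x, f |x| = (2 : ℝ) • ∫ x in Ioi (0 : ℝ), f x := by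
  have eq : ∫ (x : ℝ) in Ioi 0, f |x| = ∫ (x : ℝ) in Ioi 0, f x := by
    refine setIntegral_congr_fun measurableSet_Ioi (fun _ hx => ?_)
    rw [abs_eq_self.mpr (le_of_lt (by exact hx))]
  by_cases hf : IntegrableOn (fun x => f |x|) (Ioi 0)
  · have int_Iic : IntegrableOn (fun x ↦ f |x|) (Iic 0) := by
      rw [← Measure.map_neg_eq_self (volume : Measure ℝ)]
      let m : MeasurableEmbedding fun x : ℝ => -x := (Homeomorph.neg ℝ).measurableEmbedding
      rw [m.integrableOn_map_iff]
      simp_rw [Function.comp_def, abs_neg, neg_preimage, neg_Iic, neg_zero]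
      exact Iff.mpr integrableOn_Ici_iff_integrableOn_Ioi hf
    calc
      _ = (∫ x in Iic 0, f |x|) + ∫ x in Ioi 0, f |x| := by
        rw [← setIntegral_union (Iic_disjoint_Ioi le_rfl) measurableSet_Ioi int_Iic hf,
          Iic_union_Ioi, Measure.restrict_univ]
      _ = (2 : ℝ) • ∫ x in Ioi 0, f x := by
        rw [two_smul, eq]
        congr! 1
        rw [← neg_zero, ← integral_comp_neg_Iic, neg_zero]
        refine setIntegral_congr_fun measurableSet_Iic (fun _ hx => ?_)
        rw [abs_eq_neg_self.mpr (by exact hx)]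
  · have : ¬ Integrable (fun x => f |x|) := by
      contrapose! hf
      exact hf.integrableOn
    rw [← eq, integral_undef hf, integral_undef this, smul_zero]

/-- Complex power of a positive real, written via `Complex.exp`. -/
lemma cpow_ofReal_pos {x : ℝ} (hx : 0 < x) (c : ℂ) :
    (x : ℂ) ^ c = Complex.exp (c * Real.log x) := by
  rw [Complex.cpow_def_of_ne_zero (by exact_mod_cast hx.ne'),
    ← Complex.ofReal_log hx.le, mul_comm]

/-- The characteristic function of `ln |Z|` for `Z ~ N(0, σ²)` equals
`(√2 σ)^{it} Γ((1+it)/2) / Γ(1/2)`. -/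
theorem charFun_log_abs_gaussian (σ : ℝ≥0) (hσ : 0 < σ) (t : ℝ) :
    ∫ z : ℝ, Complex.exp (t * Complex.I * Real.log |z|)
        ∂(gaussianReal 0 (σ ^ 2)) =
      ((Real.sqrt 2 * σ : ℝ) : ℂ) ^ ((t : ℂ) * Complex.I) *
        Complex.Gamma ((1 + (t : ℂ) * Complex.I) / 2) / Complex.Gamma (1 / 2) := by
  have hs : (0 : ℝ) < (σ : ℝ) := hσ
  have hv : (σ ^ 2 : ℝ≥0) ≠ 0 := pow_ne_zero _ hσ.ne'
  set a : ℂ := (1 + (t : ℂ) * Complex.I) / 2 with ha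
  have ha_re : 0 < a.re := by
    simp [ha, Complex.add_re, Complex.div_re]
  set c : ℝ := (Real.sqrt (2 * π * ((σ : ℝ) ^ 2)))⁻¹ with hc
  set b : ℝ := (2 * (σ : ℝ) ^ 2)⁻¹ with hb
  have hbpos : 0 < b := by positivity
  -- Step 1: unfold the Gaussian integral
  have step1 : ∫ z : ℝ, Complex.exp (t * Complex.I * Real.log |z|)
        ∂(gaussianReal 0 (σ ^ 2)) =
      ∫ z : ℝ, gaussianPDFReal 0 (σ ^ 2) z •
        Complex.exp (t * Complex.I * Real.log |z|) := by
    rw [gaussianReal_of_var_ne_zero _ hv]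
    rw [show gaussianPDF 0 (σ ^ 2)
        = fun x => ((Real.toNNReal (gaussianPDFReal 0 (σ ^ 2) x) : ℝ≥0) : ℝ≥0∞) from rfl]
    rw [integral_withDensity_eq_integral_smul
      (measurable_gaussianPDFReal 0 (σ ^ 2)).real_toNNReal]
    congr 1
    ext z
    rw [NNReal.smul_def, Real.coe_toNNReal _ (gaussianPDFReal_nonneg _ _ _)]
  -- Step 2: symmetrize
  set F : ℝ → ℂ := fun x => gaussianPDFReal 0 (σ ^ 2) x •
      Complex.exp (t * Complex.I * Real.log x) with hF
  have step2 : (∫ z : ℝ, gaussianPDFReal 0 (σ ^ 2) z •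
        Complex.exp (t * Complex.I * Real.log |z|))
      = (2 : ℝ) • ∫ x in Set.Ioi (0 : ℝ), F x := by
    rw [← integral_comp_abs' F]
    congr 1
    ext z
    have hpdf : gaussianPDFReal 0 (σ ^ 2) |z| = gaussianPDFReal 0 (σ ^ 2) z := by
      simp [gaussianPDFReal, sq_abs]
    simp [hF, hpdf]
  -- Step 3: substitution x = z^2
  have step3 : (∫ x in Set.Ioi (0 : ℝ), F x)
      = ∫ x in Set.Ioi (0 : ℝ),
          (c / 2 : ℝ) • ((x : ℂ) ^ (a - 1) * Complex.exp (-(b * x))) := by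
    rw [← integral_comp_rpow_Ioi F (p := (1/2 : ℝ)) (by norm_num)]
    refine setIntegral_congr_fun measurableSet_Ioi (fun x hx => ?_)
    have hxp : (0 : ℝ) < x := hx
    have h1 : (x ^ ((1:ℝ)/2) - 0) ^ 2 = x := by
      rw [sub_zero, ← Real.rpow_natCast (x ^ ((1:ℝ)/2)) 2, ← Real.rpow_mul hxp.le]
      norm_num
    have h2 : Real.log (x ^ ((1:ℝ)/2)) = 1/2 * Real.log x := Real.log_rpow hxp _
    have h3 : x ^ ((1:ℝ)/2 - 1) = Real.exp ((-(1/2)) * Real.log x) := by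
      rw [Real.rpow_def_of_pos hxp]
      ring_nf
    have h4 : (x : ℂ) ^ (a - 1) = Complex.exp ((a - 1) * Real.log x) :=
      cpow_ofReal_pos hxp _
    simp only [hF, h1, h2, h3, h4, gaussianPDFReal, NNReal.coe_pow, smul_smul,
      Complex.real_smul]
    push_cast
    rw [← Complex.exp_add]
    rw [show (a - 1) * (Real.log x : ℂ) + -((b : ℂ) * (x : ℂ))
        = -(1/2) * (Real.log x : ℂ) + (-(x:ℂ) / (2 * ((σ:ℝ):ℂ) ^ 2)
            + (t:ℂ) * Complex.I * (1/2 * (Real.log x : ℂ))) from by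
      rw [ha, hb]
      push_cast
      ring]
    rw [Complex.exp_add, Complex.exp_add, hc]
    push_cast
    rw [show |(1:ℝ)/2| = 1/2 from abs_of_pos (by norm_num)]
    push_cast
    ring
  -- Step 4: the Gamma integral
  have step4 : (∫ x in Set.Ioi (0 : ℝ),
        (c / 2 : ℝ) • ((x : ℂ) ^ (a - 1) * Complex.exp (-(b * x))))
      = (c / 2 : ℝ) • ((1 / (b : ℂ)) ^ a * Complex.Gamma a) := by
    rw [integral_smul, Complex.integral_cpow_mul_exp_neg_mul_Ioi ha_re hbpos]
  rw [step1, step2, step3, step4, smul_smul]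
  have hL2 : (0:ℝ) < Real.sqrt 2 * σ := by positivity
  set L : ℝ := Real.log (Real.sqrt 2 * σ) with hL
  have hinvb : (1 / (b:ℂ)) = ((2 * (σ:ℝ)^2 : ℝ) : ℂ) := by
    rw [hb, one_div]
    push_cast
    rw [inv_inv]
  have hlog : Real.log (2 * (σ:ℝ)^2) = 2 * L := by
    rw [hL, show 2 * (σ:ℝ)^2 = (Real.sqrt 2 * σ)^2 from by
      rw [mul_pow, Real.sq_sqrt (by norm_num)]]
    rw [Real.log_pow]
    push_cast
    ring
  have hbpow : (1 / (b:ℂ)) ^ a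
      = ((Real.sqrt 2 * σ : ℝ) : ℂ) * Complex.exp ((t:ℂ) * Complex.I * L) := by
    rw [hinvb, cpow_ofReal_pos (by positivity) a, hlog]
    push_cast
    rw [show a * (2 * (L:ℂ)) = (L:ℂ) + (t:ℂ) * Complex.I * (L:ℂ) from by rw [ha]; ring]
    rw [Complex.exp_add, ← Complex.ofReal_exp, hL, Real.exp_log hL2]
    push_cast
    ring
  have hcpow : ((Real.sqrt 2 * σ : ℝ) : ℂ) ^ ((t:ℂ) * Complex.I)
      = Complex.exp ((t:ℂ) * Complex.I * L) := by
    rw [cpow_ofReal_pos hL2, hL]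
  have hΓhalf : Complex.Gamma (1/2) = ((Real.sqrt π : ℝ) : ℂ) := by
    rw [Complex.Gamma_one_half_eq, show ((1:ℂ)/2) = ((1/2 : ℝ) : ℂ) from by norm_num,
      ← Complex.ofReal_cpow pi_pos.le]
    norm_num [Real.sqrt_eq_rpow]
  have hval : ((c : ℝ) : ℂ) * ((Real.sqrt 2 : ℝ) : ℂ) * ((σ:ℝ) : ℂ)
      * ((Real.sqrt π : ℝ) : ℂ) = 1 := by
    rw [← Complex.ofReal_mul, ← Complex.ofReal_mul, ← Complex.ofReal_mul]
    rw [show ((1:ℂ)) = ((1:ℝ):ℂ) from by norm_num]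
    congr 1
    rw [hc, show (2:ℝ) * π * (σ:ℝ)^2 = 2 * (π * (σ:ℝ)^2) from by ring,
      Real.sqrt_mul (by norm_num), Real.sqrt_mul pi_pos.le, Real.sqrt_sq hs.le]
    have h2 : Real.sqrt 2 ≠ 0 := by positivity
    have hp : Real.sqrt π ≠ 0 := by positivity
    field_simp
  rw [hbpow, hcpow, hΓhalf, Complex.real_smul]
  have hsp : ((Real.sqrt π : ℝ) : ℂ) ≠ 0 := by
    simp only [ne_eq, Complex.ofReal_eq_zero]
    positivity
  field_simp
  linear_combination (norm := (push_cast; ring)) (Complex.Gamma a) * hval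
end

section
/- Let X and η be independent real random variables with X > 0 almost surely, X non-degenerate (not a.s. constant), and η ~ N(0, σ²). Then the product X·η does not have a Gaussian distribution N(0, τ²) for any τ > 0. -/
open MeasureTheory ProbabilityTheory Filter Real
open scoped ENNReal NNReal Topology

/-- `x ^ n` times the gaussian density is integrable. -/
lemma integrable_pow_mul_gaussianPDFReal (v : ℝ≥0) (hv : v ≠ 0) (n : ℕ) :
    Integrable (fun x : ℝ => x ^ n * gaussianPDFReal 0 v x) := by
  have hv' : (0 : ℝ) < v := lt_of_le_of_ne v.coe_nonneg (by exact_mod_cast hv.symm)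
  have hb : (0 : ℝ) < (2 * (v : ℝ))⁻¹ := by positivity
  have h := (integrable_rpow_mul_exp_neg_mul_sq hb
      (s := (n : ℝ)) (lt_of_lt_of_le neg_one_lt_zero (Nat.cast_nonneg n))).const_mul
      ((√(2 * π * (v : ℝ)))⁻¹)
  refine h.congr (Filter.Eventually.of_forall fun x => ?_)
  show (√(2 * π * (v : ℝ)))⁻¹ * (x ^ (n : ℝ) * rexp (-(2 * (v : ℝ))⁻¹ * x ^ 2))
      = x ^ n * gaussianPDFReal 0 v x
  have harg : -(2 * (v : ℝ))⁻¹ * x ^ 2 = -(x - 0) ^ 2 / (2 * (v : ℝ)) := by ring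
  rw [Real.rpow_natCast, harg, gaussianPDFReal]
  ring

/-- Even moments of the gaussian are finite. -/
lemma lintegral_pow_gaussian_lt_top (v : ℝ≥0) (hv : v ≠ 0) {k : ℕ} (hk : Even k) :
    ∫⁻ x, ENNReal.ofReal (x ^ k) ∂(gaussianReal 0 v) < ∞ := by
  have hg : Measurable fun x : ℝ => ENNReal.ofReal (x ^ k) := by fun_prop
  rw [gaussianReal_of_var_ne_zero 0 hv,
    lintegral_withDensity_eq_lintegral_mul _ (measurable_gaussianPDF 0 v) hg]
  have heq : ∀ x : ℝ, (gaussianPDF 0 v * fun x => ENNReal.ofReal (x ^ k)) x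
      = ENNReal.ofReal (x ^ k * gaussianPDFReal 0 v x) := by
    intro x
    simp only [Pi.mul_apply, gaussianPDF]
    rw [ENNReal.ofReal_mul (hk.pow_nonneg x), mul_comm]
  simp only [heq]
  exact (integrable_pow_mul_gaussianPDFReal v hv k).lintegral_lt_top

/-- Moments of the gaussian (any power) are nonzero. -/
lemma lintegral_pow_gaussian_ne_zero (v : ℝ≥0) (hv : v ≠ 0) (k : ℕ) :
    ∫⁻ x, ENNReal.ofReal (x ^ k) ∂(gaussianReal 0 v) ≠ 0 := by
  intro h0
  have hle : gaussianReal 0 v (Set.Ioi (1 : ℝ))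
      ≤ ∫⁻ x in Set.Ioi (1 : ℝ), ENNReal.ofReal (x ^ k) ∂(gaussianReal 0 v) := by
    rw [← setLIntegral_one]
    refine setLIntegral_mono (ENNReal.measurable_ofReal.comp
      (measurable_id.pow_const _)) fun x hx => ?_
    have hx1 : (1 : ℝ) ≤ x ^ k := one_le_pow₀ (le_of_lt hx)
    simpa using ENNReal.one_le_ofReal.mpr hx1
  have hzero : ∫⁻ x in Set.Ioi (1 : ℝ), ENNReal.ofReal (x ^ k) ∂(gaussianReal 0 v) = 0 :=
    le_antisymm (h0 ▸ setLIntegral_le_lintegral _ _) zero_le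
  have hγ0 : gaussianReal 0 v (Set.Ioi (1 : ℝ)) = 0 := le_antisymm (hzero ▸ hle) zero_le
  have := gaussianReal_absolutelyContinuous' 0 hv hγ0
  simp [Real.volume_Ioi] at this

/-- If `X` and `η` are independent, `X > 0` a.s., `X` is not a.s. constant, and
`η ~ N(0, σ²)`, then `X·η` is not Gaussian `N(0, τ²)` for any `τ > 0`. -/
theorem mul_indep_pos_nondegenerate_gaussian_not_gaussian
    {Ω : Type*} [MeasurableSpace Ω] (P : Measure Ω) [IsProbabilityMeasure P]
    (X η : Ω → ℝ) (hX : Measurable X) (hη : Measurable η)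
    (hindep : IndepFun X η P)
    (hpos : ∀ᵐ ω ∂P, 0 < X ω)
    (hnondeg : ¬ ∃ c : ℝ, X =ᵐ[P] fun _ => c)
    (σ : ℝ≥0) (hσ : 0 < σ) (hηlaw : P.map η = gaussianReal 0 (σ ^ 2)) :
    ∀ τ : ℝ≥0, 0 < τ → P.map (fun ω => X ω * η ω) ≠ gaussianReal 0 (τ ^ 2) := by
  intro τ hτ hmap
  have hσ0 : (σ : ℝ) ≠ 0 := by exact_mod_cast hσ.ne'
  have hσ2 : (σ ^ 2 : ℝ≥0) ≠ 0 := pow_ne_zero 2 hσ.ne'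
  set c : ℝ := (τ : ℝ) / (σ : ℝ) with hc_def
  have hc : 0 < c := div_pos (by exact_mod_cast hτ) (by positivity)
  have hmapγ : (gaussianReal 0 (σ ^ 2)).map (c * ·) = gaussianReal 0 (τ ^ 2) := by
    rw [gaussianReal_map_const_mul, mul_zero]
    congr 1
    refine NNReal.coe_injective ?_
    push_cast
    rw [hc_def]
    field_simp
  -- key moment identity
  have key : ∀ k : ℕ, Even k →
      ∫⁻ ω, ENNReal.ofReal (X ω ^ k) ∂P = ENNReal.ofReal (c ^ k) := by
    intro k hk
    have hmeasf : Measurable fun x : ℝ => ENNReal.ofReal (x ^ k) :=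
      ENNReal.measurable_ofReal.comp (measurable_id.pow_const _)
    have hB0 : ∫⁻ x, ENNReal.ofReal (x ^ k) ∂(gaussianReal 0 (σ ^ 2)) ≠ 0 :=
      lintegral_pow_gaussian_ne_zero _ hσ2 k
    have hBfin : ∫⁻ x, ENNReal.ofReal (x ^ k) ∂(gaussianReal 0 (σ ^ 2)) ≠ ∞ :=
      (lintegral_pow_gaussian_lt_top _ hσ2 hk).ne
    refine (ENNReal.mul_left_inj hB0 hBfin).mp ?_
    have hind : IndepFun (fun ω => ENNReal.ofReal (X ω ^ k))
        (fun ω => ENNReal.ofReal (η ω ^ k)) P := hindep.comp hmeasf hmeasf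
    calc (∫⁻ ω, ENNReal.ofReal (X ω ^ k) ∂P)
          * ∫⁻ x, ENNReal.ofReal (x ^ k) ∂(gaussianReal 0 (σ ^ 2))
        = (∫⁻ ω, ENNReal.ofReal (X ω ^ k) ∂P)
          * ∫⁻ ω, ENNReal.ofReal (η ω ^ k) ∂P := by
          rw [← hηlaw, lintegral_map hmeasf hη]
      _ = ∫⁻ ω, ENNReal.ofReal (X ω ^ k) * ENNReal.ofReal (η ω ^ k) ∂P :=
          (lintegral_mul_eq_lintegral_mul_lintegral_of_indepFun
            (hmeasf.comp hX) (hmeasf.comp hη) hind).symm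
      _ = ∫⁻ ω, ENNReal.ofReal ((X ω * η ω) ^ k) ∂P := by
          refine lintegral_congr fun ω => ?_
          rw [mul_pow, ENNReal.ofReal_mul (hk.pow_nonneg _)]
      _ = ∫⁻ x, ENNReal.ofReal (x ^ k) ∂(P.map (fun ω => X ω * η ω)) :=
          (lintegral_map hmeasf (hX.mul hη)).symm
      _ = ∫⁻ x, ENNReal.ofReal (x ^ k) ∂((gaussianReal 0 (σ ^ 2)).map (c * ·)) := by
          rw [hmap, hmapγ]
      _ = ∫⁻ x, ENNReal.ofReal ((c * x) ^ k) ∂(gaussianReal 0 (σ ^ 2)) :=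
          lintegral_map hmeasf (measurable_const_mul c)
      _ = ENNReal.ofReal (c ^ k)
          * ∫⁻ x, ENNReal.ofReal (x ^ k) ∂(gaussianReal 0 (σ ^ 2)) := by
          rw [← lintegral_const_mul _ hmeasf]
          refine lintegral_congr fun x => ?_
          rw [mul_pow, ENNReal.ofReal_mul (pow_nonneg hc.le _)]
  have key2 := key 2 (even_two)
  have key4 := key 4 (by decide)
  -- integrability of X^2 and X^4
  have hX2nn : 0 ≤ᵐ[P] fun ω => X ω ^ 2 := Filter.Eventually.of_forall fun ω => sq_nonneg _
  have hX4nn : 0 ≤ᵐ[P] fun ω => X ω ^ 4 :=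
    Filter.Eventually.of_forall fun ω => by positivity
  have hint2 : Integrable (fun ω => X ω ^ 2) P := by
    refine (lintegral_ofReal_ne_top_iff_integrable
      ((hX.pow_const 2).aestronglyMeasurable) hX2nn).mp ?_
    rw [key2]; exact ENNReal.ofReal_ne_top
  have hint4 : Integrable (fun ω => X ω ^ 4) P := by
    refine (lintegral_ofReal_ne_top_iff_integrable
      ((hX.pow_const 4).aestronglyMeasurable) hX4nn).mp ?_
    rw [key4]; exact ENNReal.ofReal_ne_top
  set m : ℝ := ∫ ω, X ω ^ 2 ∂P with hm_def
  have hm_nonneg : 0 ≤ m := integral_nonneg fun ω => sq_nonneg _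
  have hm_eq : m = c ^ 2 := by
    have h1 : ENNReal.ofReal m = ENNReal.ofReal (c ^ 2) := by
      rw [hm_def, ofReal_integral_eq_lintegral_ofReal hint2 hX2nn, key2]
    exact (ENNReal.ofReal_eq_ofReal_iff hm_nonneg (sq_nonneg c)).mp h1
  have h4_eq : ∫ ω, X ω ^ 4 ∂P = m ^ 2 := by
    have h1 : ENNReal.ofReal (∫ ω, X ω ^ 4 ∂P) = ENNReal.ofReal (m ^ 2) := by
      rw [ofReal_integral_eq_lintegral_ofReal hint4 hX4nn, key4, hm_eq]
      norm_num [← ENNReal.ofReal_pow (sq_nonneg c), ← pow_mul]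
    exact (ENNReal.ofReal_eq_ofReal_iff
      (integral_nonneg fun ω => by positivity) (sq_nonneg m)).mp h1
  -- variance of X^2 is zero
  have hfun : (fun ω => (X ω ^ 2 - m) ^ 2)
      = fun ω => X ω ^ 4 - (2 * m) * X ω ^ 2 + m ^ 2 := by
    funext ω; ring
  have hint_sq : Integrable (fun ω => (X ω ^ 2 - m) ^ 2) P := by
    rw [hfun]
    exact (hint4.sub (hint2.const_mul (2 * m))).add (integrable_const _)
  have hintsub : Integrable (fun ω => X ω ^ 4 - 2 * m * X ω ^ 2) P :=
    hint4.sub (hint2.const_mul (2 * m))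
  have hvar0 : ∫ ω, (X ω ^ 2 - m) ^ 2 ∂P = 0 := by
    rw [hfun,
      integral_add (g := fun _ => m ^ 2) hintsub (integrable_const _),
      integral_sub hint4 (hint2.const_mul (2 * m)), integral_const_mul, h4_eq,
      integral_const, ← hm_def]
    simp
    ring
  have hae : ∀ᵐ ω ∂P, (X ω ^ 2 - m) ^ 2 = 0 := by
    have := (integral_eq_zero_iff_of_nonneg (fun ω => sq_nonneg _) hint_sq).mp hvar0
    filter_upwards [this] with ω hω using hω
  refine hnondeg ⟨Real.sqrt m, ?_⟩
  filter_upwards [hpos, hae] with ω hωpos hω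
  have hX2 : X ω ^ 2 = m := by
    have := sq_eq_zero_iff.mp hω
    linarith
  rw [← hX2, Real.sqrt_sq hωpos.le]
end

section
/- Gaussian mechanism privacy: let f: D → ℝ have ℓ₁-sensitivity S_f = max over neighboring datasets D, D' of |f(D) − f(D')|. If η ~ N(0, S_f² σ²) with σ² ≥ 2 ln(1.25/δ)/ε² and 0 < ε < 1, then the mechanism M(d) = f(d) + η satisfies (ε, δ)-differential privacy: for all neighboring D, D' and all measurable S ⊆ ℝ, Pr[M(D) ∈ S] ≤ e^ε Pr[M(D') ∈ S] + δ. -/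
open MeasureTheory ProbabilityTheory Real
open scoped ENNReal NNReal


lemma gm_shift_Ioi (m a : ℝ) (v : ℝ≥0) :
    gaussianReal m v (Set.Ioi a) = gaussianReal 0 v (Set.Ioi (a - m)) := by
  rw [show gaussianReal m v = (gaussianReal 0 v).map (· + m) from by
    rw [gaussianReal_map_add_const, zero_add]]
  rw [Measure.map_apply (measurable_add_const m) measurableSet_Ioi]
  congr 1
  ext x
  simp [sub_lt_iff_lt_add]

lemma gm_shift_Iio (m a : ℝ) (v : ℝ≥0) :
    gaussianReal m v (Set.Iio a) = gaussianReal 0 v (Set.Iio (a - m)) := by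
  rw [show gaussianReal m v = (gaussianReal 0 v).map (· + m) from by
    rw [gaussianReal_map_add_const, zero_add]]
  rw [Measure.map_apply (measurable_add_const m) measurableSet_Iio]
  congr 1
  ext x
  simp [lt_sub_iff_add_lt]

lemma gm_neg (v : ℝ≥0) (a : ℝ) :
    gaussianReal 0 v (Set.Iio a) = gaussianReal 0 v (Set.Ioi (-a)) := by
  have hmap : (gaussianReal 0 v).map ((-1 : ℝ) * ·) = gaussianReal 0 v := by
    rw [gaussianReal_map_const_mul]
    norm_num
  conv_lhs => rw [← hmap]
  rw [Measure.map_apply (measurable_const_mul _) measurableSet_Iio]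
  congr 1
  ext x
  simp only [Set.mem_preimage, Set.mem_Iio, Set.mem_Ioi]
  constructor <;> intro h <;> linarith

lemma gm_half {v : ℝ≥0} (hv : v ≠ 0) : gaussianReal 0 v (Set.Ioi (0:ℝ)) = 1/2 := by
  have hsym : gaussianReal 0 v (Set.Iio (0:ℝ)) = gaussianReal 0 v (Set.Ioi (0:ℝ)) := by
    simpa using gm_neg v 0
  have h0 : gaussianReal 0 v {(0:ℝ)} = 0 :=
    gaussianReal_absolutelyContinuous 0 hv (by simp)
  have hc : gaussianReal 0 v ({(0:ℝ)}ᶜ) = 1 := by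
    rw [measure_compl (measurableSet_singleton 0) (measure_ne_top _ _), h0, measure_univ,
      tsub_zero]
  have hu : gaussianReal 0 v (Set.Iio (0:ℝ)) + gaussianReal 0 v (Set.Ioi (0:ℝ)) = 1 := by
    rw [← measure_union (by simp [Set.disjoint_left]; intro a ha; exact le_of_lt ha) measurableSet_Ioi, Set.Iio_union_Ioi, hc]
  rw [hsym] at hu
  have h2 : 2 * gaussianReal 0 v (Set.Ioi (0:ℝ)) = 1 := by rw [two_mul]; exact hu
  rw [ENNReal.eq_div_iff (by norm_num) (by norm_num)]
  exact h2

lemma gm_pdf_ratio {m m' x c : ℝ} {v : ℝ≥0} (hv : v ≠ 0)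
    (h : (x - m') ^ 2 - (x - m) ^ 2 ≤ 2 * (v : ℝ) * c) :
    gaussianPDF m v x ≤ ENNReal.ofReal (Real.exp c) * gaussianPDF m' v x := by
  have hvpos : (0:ℝ) < v := lt_of_le_of_ne v.coe_nonneg (by exact_mod_cast hv.symm)
  unfold gaussianPDF
  rw [← ENNReal.ofReal_mul (Real.exp_nonneg c)]
  apply ENNReal.ofReal_le_ofReal
  unfold gaussianPDFReal
  rw [show Real.exp c * ((√(2 * π * v))⁻¹ * rexp (-(x - m') ^ 2 / (2 * v)))
      = (√(2 * π * v))⁻¹ * (rexp c * rexp (-(x - m') ^ 2 / (2 * v))) from by ring,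
    ← Real.exp_add]
  apply mul_le_mul_of_nonneg_left _ (by positivity)
  apply Real.exp_le_exp.mpr
  rw [← sub_le_iff_le_add, div_sub_div_same, div_le_iff₀ (by positivity)]
  nlinarith [hvpos]

lemma gm_tail {v : ℝ≥0} (hv : v ≠ 0) {a : ℝ} (ha : 0 ≤ a) :
    gaussianReal 0 v (Set.Ioi a) ≤ ENNReal.ofReal (Real.exp (-a ^ 2 / (2 * v)) / 2) := by
  have hvpos : (0:ℝ) < v := lt_of_le_of_ne v.coe_nonneg (by exact_mod_cast hv.symm)
  rw [gaussianReal_apply _ hv]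
  calc ∫⁻ x in Set.Ioi a, gaussianPDF 0 v x
      ≤ ∫⁻ x in Set.Ioi a, ENNReal.ofReal (Real.exp (-a ^ 2 / (2 * v))) * gaussianPDF a v x := by
        apply setLIntegral_mono (measurable_const.mul (measurable_gaussianPDF _ _))
        intro x hx
        apply gm_pdf_ratio hv
        have hx' : a < x := hx
        have hrw : 2 * (v:ℝ) * (-a ^ 2 / (2 * v)) = -a ^ 2 := by field_simp
        rw [hrw]
        nlinarith [mul_le_mul_of_nonneg_left hx'.le ha]
    _ = ENNReal.ofReal (Real.exp (-a ^ 2 / (2 * v))) * ∫⁻ x in Set.Ioi a, gaussianPDF a v x :=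
        lintegral_const_mul _ (measurable_gaussianPDF _ _)
    _ = ENNReal.ofReal (Real.exp (-a ^ 2 / (2 * v))) * (1/2) := by
        rw [← gaussianReal_apply _ hv, gm_shift_Ioi, sub_self, gm_half hv]
    _ = ENNReal.ofReal (Real.exp (-a ^ 2 / (2 * v)) / 2) := by
        rw [ENNReal.ofReal_div_of_pos (by norm_num)]
        rw [div_eq_mul_inv, mul_comm (ENNReal.ofReal _)]
        norm_num [ENNReal.ofReal_ofNat, div_eq_mul_inv, mul_comm]

lemma gm_strip {v : ℝ≥0} (hv : v ≠ 0) {a : ℝ} (ha : a ≤ 0) :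
    gaussianReal 0 v (Set.Ioc a 0) ≤ ENNReal.ofReal ((√(2 * π * v))⁻¹ * (-a)) := by
  rw [gaussianReal_apply _ hv]
  calc ∫⁻ x in Set.Ioc a 0, gaussianPDF 0 v x
      ≤ ∫⁻ _ in Set.Ioc a 0, ENNReal.ofReal ((√(2 * π * v))⁻¹) := by
        apply setLIntegral_mono measurable_const
        intro x _
        apply ENNReal.ofReal_le_ofReal
        unfold gaussianPDFReal
        have h1 : rexp (-(x - 0) ^ 2 / (2 * v)) ≤ 1 := by
          apply Real.exp_le_one_iff.mpr
          apply div_nonpos_of_nonpos_of_nonneg (neg_nonpos.mpr (by positivity)) (by positivity)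
        nlinarith [Real.sqrt_nonneg (2 * π * v), inv_nonneg.mpr (Real.sqrt_nonneg (2 * π * v))]
    _ = ENNReal.ofReal ((√(2 * π * v))⁻¹) * ENNReal.ofReal (0 - a) := by
        rw [setLIntegral_const, Real.volume_Ioc]
    _ ≤ ENNReal.ofReal ((√(2 * π * v))⁻¹ * (-a)) := by
        rw [← ENNReal.ofReal_mul (by positivity)]
        simp

lemma gm_quad {S a₀ E Δ w : ℝ} (hS : 0 < S) (hE : 0 ≤ E)
    (ha₀ : a₀ * S = E - S ^ 2 / 2) (hΔ0 : 0 < Δ) (hΔS : Δ ≤ S)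
    (hw : 2 * E < 2 * w * Δ + Δ ^ 2) : a₀ < w := by
  by_contra hcon
  push_neg at hcon
  have h2 : 0 ≤ S + Δ + 2 * a₀ := by nlinarith
  nlinarith [mul_nonneg (sub_nonneg.mpr hΔS) h2, mul_nonneg hΔ0.le (sub_nonneg.mpr hcon)]

set_option maxHeartbeats 1000000 in
/-- Gaussian mechanism privacy: if `f` has ℓ₁-sensitivity `S_f` over neighboring
datasets and `η ~ N(0, S_f² σ²)` with `σ² ≥ 2 ln(1.25/δ)/ε²` and `0 < ε < 1`, then
`M(d) = f(d) + η` is `(ε, δ)`-differentially private: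
`Pr[M(D) ∈ s] ≤ e^ε Pr[M(D') ∈ s] + δ` for all neighboring `D, D'` and measurable
`s`. -/
theorem gaussian_mechanism_DP {D : Type*} (Neighbor : D → D → Prop)
    (f : D → ℝ) (Sf σ : ℝ≥0)
    (hSf : ∀ d d', Neighbor d d' → |f d - f d'| ≤ Sf)
    (ε δ : ℝ) (hε0 : 0 < ε) (hε1 : ε < 1) (hδ : 0 < δ)
    (hσ : 2 * Real.log (1.25 / δ) / ε ^ 2 ≤ (σ : ℝ) ^ 2) :
    ∀ d d', Neighbor d d' → ∀ s : Set ℝ, MeasurableSet s →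
      gaussianReal (f d) (Sf ^ 2 * σ ^ 2) s ≤
        ENNReal.ofReal (Real.exp ε) * gaussianReal (f d') (Sf ^ 2 * σ ^ 2) s
          + ENNReal.ofReal δ := by
  intro d d' hnb s _hs
  set v : ℝ≥0 := Sf ^ 2 * σ ^ 2 with hv_def
  -- trivial case `1 ≤ δ`
  by_cases hδ1 : 1 ≤ δ
  · refine le_trans prob_le_one (le_trans ?_ le_add_self)
    rwa [ENNReal.one_le_ofReal]
  push_neg at hδ1
  -- trivial case of equal means
  by_cases hmeq : f d = f d'
  · rw [hmeq]
    refine le_trans ?_ le_self_add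
    nth_rewrite 1 [← one_mul (gaussianReal (f d') v s)]
    refine mul_le_mul_left ?_ _
    rw [ENNReal.one_le_ofReal]
    exact Real.one_le_exp hε0.le
  -- main case
  set L := Real.log (1.25 / δ) with hL_def
  have h125pos : (0:ℝ) < 1.25 / δ := by positivity
  have hLpos : 0 < L := Real.log_pos (by rw [lt_div_iff₀ hδ]; linarith)
  have hL5 : 1/5 ≤ L := by
    have h1 : Real.log (0.8:ℝ) ≤ 0.8 - 1 := Real.log_le_sub_one_of_pos (by norm_num)
    have h2 : Real.log (1.25:ℝ) = -Real.log (0.8:ℝ) := by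
      rw [show (1.25:ℝ) = (0.8:ℝ)⁻¹ by norm_num, Real.log_inv]
    have h3 : Real.log (1.25:ℝ) ≤ L := by
      apply Real.log_le_log (by norm_num)
      rw [le_div_iff₀ hδ]; nlinarith
    linarith
  have hΔ0 : f d - f d' ≠ 0 := sub_ne_zero.mpr hmeq
  have hΔS : |f d - f d'| ≤ (Sf:ℝ) := hSf d d' hnb
  have hSpos : (0:ℝ) < Sf := lt_of_lt_of_le (abs_pos.mpr hΔ0) hΔS
  have hgpos : (0:ℝ) < σ := by
    rcases σ.coe_nonneg.eq_or_lt with h | h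
    · exfalso
      rw [← h] at hσ
      have : (0:ℝ) < 2 * L / ε ^ 2 := by positivity
      nlinarith
    · exact h
  set S : ℝ := (Sf:ℝ) with hS_def
  set g : ℝ := (σ:ℝ) with hg_def
  have hvRe : ((v:ℝ≥0):ℝ) = S ^ 2 * g ^ 2 := by rw [hv_def]; push_cast; ring
  have hvR : (0:ℝ) < (v:ℝ) := by rw [hvRe]; positivity
  have hvne : v ≠ 0 := by
    intro h
    rw [h] at hvR
    simp at hvR
  have hσε2 : 2 * L ≤ g ^ 2 * ε ^ 2 := by
    rw [div_le_iff₀ (by positivity : (0:ℝ) < ε ^ 2)] at hσ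
    exact hσ
  set B : Set ℝ := {x | 2 * ((v:ℝ≥0):ℝ) * ε < (x - f d') ^ 2 - (x - f d) ^ 2} with hB_def
  have hB : MeasurableSet B := measurableSet_lt measurable_const (by fun_prop)
  have step1 : gaussianReal (f d) v s
      ≤ gaussianReal (f d) v (s \ B) + gaussianReal (f d) v B := by
    refine le_trans (measure_mono ?_) (measure_union_le _ _)
    intro x hx
    by_cases hxB : x ∈ B
    · exact Or.inr hxB
    · exact Or.inl ⟨hx, hxB⟩
  have step2 : gaussianReal (f d) v (s \ B)
      ≤ ENNReal.ofReal (Real.exp ε) * gaussianReal (f d') v s := by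
    rw [gaussianReal_apply _ hvne, gaussianReal_apply _ hvne]
    calc ∫⁻ x in s \ B, gaussianPDF (f d) v x
        ≤ ∫⁻ x in s \ B, ENNReal.ofReal (Real.exp ε) * gaussianPDF (f d') v x := by
          apply setLIntegral_mono (measurable_const.mul (measurable_gaussianPDF _ _))
          intro x hx
          exact gm_pdf_ratio hvne (le_of_not_gt hx.2)
      _ = ENNReal.ofReal (Real.exp ε) * ∫⁻ x in s \ B, gaussianPDF (f d') v x :=
          lintegral_const_mul _ (measurable_gaussianPDF _ _)
      _ ≤ ENNReal.ofReal (Real.exp ε) * ∫⁻ x in s, gaussianPDF (f d') v x :=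
          mul_le_mul_right (lintegral_mono_set Set.diff_subset) _
  -- the tail bound
  obtain ⟨a₀, ha₀_def⟩ : ∃ a : ℝ, a = S ^ 2 * g ^ 2 * ε / S - S / 2 := ⟨_, rfl⟩
  obtain ⟨t, ht_def⟩ : ∃ u : ℝ, u = g * ε - 1 / (2 * g) := ⟨_, rfl⟩
  have ha₀t : a₀ = S * g * t := by
    rw [ha₀_def, ht_def]
    field_simp
  have step3a : gaussianReal (f d) v B ≤ gaussianReal 0 v (Set.Ioi a₀) := by
    rcases hΔ0.lt_or_gt with hneg | hpos
    · -- f d < f d' : B ⊆ Iio (f d - a₀)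
      have hsub : B ⊆ Set.Iio (f d - a₀) := by
        intro x hx
        have hx' : 2 * ((v:ℝ≥0):ℝ) * ε < (x - f d') ^ 2 - (x - f d) ^ 2 := hx
        rw [hvRe] at hx'
        simp only [Set.mem_Iio]
        have ha₀S : a₀ * S = S ^ 2 * g ^ 2 * ε - S ^ 2 / 2 := by
          rw [ha₀_def]; field_simp
        have := gm_quad hSpos (by positivity : (0:ℝ) ≤ S ^ 2 * g ^ 2 * ε) ha₀S
          (by linarith : (0:ℝ) < f d' - f d) (by linarith [abs_le.mp hΔS] : f d' - f d ≤ S)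
          (by nlinarith : 2 * (S ^ 2 * g ^ 2 * ε) < 2 * (f d - x) * (f d' - f d)
            + (f d' - f d) ^ 2)
        linarith
      refine le_trans (measure_mono hsub) (le_of_eq ?_)
      rw [gm_shift_Iio, show f d - a₀ - f d = -a₀ by ring, gm_neg, neg_neg]
    · -- f d' < f d : B ⊆ Ioi (f d + a₀)
      have hsub : B ⊆ Set.Ioi (f d + a₀) := by
        intro x hx
        have hx' : 2 * ((v:ℝ≥0):ℝ) * ε < (x - f d') ^ 2 - (x - f d) ^ 2 := hx
        rw [hvRe] at hx'
        simp only [Set.mem_Ioi]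
        have ha₀S : a₀ * S = S ^ 2 * g ^ 2 * ε - S ^ 2 / 2 := by
          rw [ha₀_def]; field_simp
        have := gm_quad hSpos (by positivity : (0:ℝ) ≤ S ^ 2 * g ^ 2 * ε) ha₀S
          hpos (by linarith [abs_le.mp hΔS] : f d - f d' ≤ S)
          (by nlinarith : 2 * (S ^ 2 * g ^ 2 * ε) < 2 * (x - f d) * (f d - f d')
            + (f d - f d') ^ 2)
        linarith
      refine le_trans (measure_mono hsub) (le_of_eq ?_)
      rw [gm_shift_Ioi, show f d + a₀ - f d = a₀ by ring]
  have step3 : gaussianReal 0 v (Set.Ioi a₀) ≤ ENNReal.ofReal δ := by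
    rcases le_or_gt 0 t with ht | ht
    · -- large-σ case: Chernoff-style bound
      have ha₀nn : 0 ≤ a₀ := by
        rw [ha₀t]; exact mul_nonneg (mul_nonneg hSpos.le hgpos.le) ht
      refine le_trans (gm_tail hvne ha₀nn) (ENNReal.ofReal_le_ofReal ?_)
      have harg : -a₀ ^ 2 / (2 * ((v:ℝ≥0):ℝ)) = -(t ^ 2) / 2 := by
        rw [hvRe, ha₀t]
        field_simp
      rw [harg]
      have ht2 : 2 * L - ε ≤ t ^ 2 := by
        have htsq : t ^ 2 = g ^ 2 * ε ^ 2 - ε + 1 / (4 * g ^ 2) := by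
          rw [ht_def]; field_simp; ring
        have hpos4 : (0:ℝ) < 1 / (4 * g ^ 2) := by positivity
        nlinarith
      have hmono : Real.exp (-(t ^ 2) / 2) ≤ Real.exp (1/2 - L) :=
        Real.exp_le_exp.mpr (by linarith)
      have hexpL : Real.exp (1/2 - L) = Real.exp (1/2) * (4/5 * δ) := by
        rw [Real.exp_sub, hL_def, Real.exp_log h125pos,
          show (1.25:ℝ) = 5/4 from by norm_num]
        field_simp
      have hehalf : Real.exp (1/2) ≤ 5/2 := by
        have hsq : Real.exp 1 = Real.exp (1/2) * Real.exp (1/2) := by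
          rw [← Real.exp_add]; norm_num
        have h272 : Real.exp 1 < 68/25 := lt_trans Real.exp_one_lt_d9 (by norm_num)
        nlinarith [Real.exp_pos (1/2:ℝ)]
      nlinarith [Real.exp_pos (1/2:ℝ)]
    · -- small-σ case: δ is large
      have ha₀neg : a₀ < 0 := by
        rw [ha₀t]
        exact mul_neg_of_pos_of_neg (mul_pos hSpos hgpos) ht
      have hsplit : gaussianReal 0 v (Set.Ioi a₀)
          = gaussianReal 0 v (Set.Ioc a₀ 0) + gaussianReal 0 v (Set.Ioi (0:ℝ)) := by
        rw [← measure_union (Set.Ioc_disjoint_Ioi le_rfl) measurableSet_Ioi,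
          Set.Ioc_union_Ioi_eq_Ioi ha₀neg.le]
      rw [hsplit, gm_half hvne]
      refine le_trans (add_le_add_left (gm_strip hvne ha₀neg.le) _) ?_
      have hhalf : (1/2 : ℝ≥0∞) = ENNReal.ofReal (1/2) := by
        rw [ENNReal.ofReal_div_of_pos (by norm_num), ENNReal.ofReal_one,
          ENNReal.ofReal_ofNat]
      rw [hhalf, ← ENNReal.ofReal_add
        (mul_nonneg (by positivity) (by linarith : (0:ℝ) ≤ -a₀)) (by norm_num)]
      apply ENNReal.ofReal_le_ofReal
      have hsq2pi : (5/2:ℝ) ≤ √(2 * π) := by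
        rw [Real.le_sqrt (by norm_num) (by positivity)]
        nlinarith [Real.pi_gt_d2]
      have hsqrt : √(2 * π * ((v:ℝ≥0):ℝ)) = √(2 * π) * (S * g) := by
        rw [hvRe, show 2 * π * (S ^ 2 * g ^ 2) = (2 * π) * (S * g) ^ 2 by ring,
          Real.sqrt_mul (by positivity), Real.sqrt_sq (by positivity)]
      have hterm : (√(2 * π * ((v:ℝ≥0):ℝ)))⁻¹ * (-a₀) = (-t) / √(2 * π) := by
        rw [hsqrt, ha₀t]
        have h2pi : (0:ℝ) < √(2 * π) := by linarith
        field_simp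
      rw [hterm]
      -- numeric bounds
      have hb2 : (2:ℝ)/5 ≤ (g * ε) ^ 2 := by nlinarith
      have hbpos : (0:ℝ) < g * ε := mul_pos hgpos hε0
      have hb : (5/8:ℝ) ≤ g * ε := by nlinarith
      have hgb : g * ε ≤ g := by nlinarith
      have hg58 : (5/8:ℝ) ≤ g := le_trans hb hgb
      have hmt : -t ≤ 7/40 := by
        rw [ht_def]
        have h1 : 1 / (2 * g) ≤ 1 / (2 * (5/8)) := by
          apply one_div_le_one_div_of_le (by norm_num)
          linarith
        have heq : -(g * ε - 1 / (2 * g)) = 1 / (2 * g) - g * ε := by ring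
        rw [heq]
        have h2 : 1 / (2 * ((5:ℝ)/8)) = 4/5 := by norm_num
        rw [h2] at h1
        linarith
      have hδlb : (15:ℝ)/16 ≤ δ := by
        have ht' : g * ε < 1 / (2 * g) := by
          have := ht
          rw [ht_def] at this
          linarith
        have hg2e : g ^ 2 * ε < 1/2 := by
          have h := mul_lt_mul_of_pos_left ht' hgpos
          have heq : g * (1 / (2 * g)) = 1/2 := by field_simp
          rw [heq] at h
          nlinarith [h]
        have hL4 : L < 1/4 := by
          nlinarith [mul_pos (sub_pos.mpr hg2e) hε0]
        have h3 : (3:ℝ)/4 ≤ Real.exp (-(1/4)) := by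
          have := Real.add_one_le_exp (-(1/4):ℝ)
          linarith
        have h4 : Real.exp (1/4:ℝ) ≤ 4/3 := by
          rw [show (1/4:ℝ) = -(-(1/4)) by ring, Real.exp_neg]
          rw [inv_le_comm₀ (Real.exp_pos _) (by norm_num)]
          rw [show ((4:ℝ)/3)⁻¹ = 3/4 by norm_num]
          exact h3
        have h5 : 1.25 / δ < 4/3 := by
          calc 1.25 / δ = Real.exp L := (Real.exp_log h125pos).symm
            _ < Real.exp (1/4) := Real.exp_lt_exp.mpr hL4
            _ ≤ 4/3 := h4
        rw [div_lt_iff₀ hδ, show (1.25:ℝ) = 5/4 from by norm_num] at h5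
        linarith
      have hdiv : -t / √(2 * π) ≤ (7/40) / (5/2) :=
        div_le_div₀ (by norm_num) hmt (by norm_num) hsq2pi
      have h7 : ((7:ℝ)/40) / (5/2) = 7/100 := by norm_num
      rw [h7] at hdiv
      linarith
  calc gaussianReal (f d) v s
      ≤ gaussianReal (f d) v (s \ B) + gaussianReal (f d) v B := step1
    _ ≤ ENNReal.ofReal (Real.exp ε) * gaussianReal (f d') v s + ENNReal.ofReal δ :=
        add_le_add step2 (le_trans step3a step3)
end
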